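/- arXiv:2301.05087 — 5 statements merged into one kernel-verified Lean document; each statement's English description precedes it below -/
import Mathlib

section
/- Let Ω = ⋂_{i∈I} {u_i ≤ 0} be a compact convex polytope in ℝⁿ with non-empty interior, where each u_i is a non-constant linear function, and assume no inequality is redundant (for each i₀, the set {u_{i₀} > 0} ∩ ⋂_{i≠i₀} {u_i ≤ 0} is non-empty). Then for each i₀ ∈ I, the set {u_{i₀} = 0} ∩ ⋂_{i≠i₀} {u_i < 0} is non-empty. -/
/-- For a compact convex polytope `Ω = ⋂ᵢ {uᵢ ≤ 0}` with non-empty interior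
and no redundant inequalities, for each `i₀` the open face
`{u_{i₀} = 0} ∩ ⋂_{i ≠ i₀} {uᵢ < 0}` is non-empty. -/
theorem stmt_5 (n : ℕ) (I : Type*) [Fintype I]
    (u : I → (EuclideanSpace ℝ (Fin n) →ᵃ[ℝ] ℝ))
    (hnc : ∀ i, ∃ x y, u i x ≠ u i y)
    (hcomp : IsCompact {x : EuclideanSpace ℝ (Fin n) | ∀ i, u i x ≤ 0})
    (hint : (interior {x : EuclideanSpace ℝ (Fin n) | ∀ i, u i x ≤ 0}).Nonempty)
    (hnr : ∀ i₀, ∃ x : EuclideanSpace ℝ (Fin n),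
      0 < u i₀ x ∧ ∀ i, i ≠ i₀ → u i x ≤ 0) :
    ∀ i₀, ∃ x : EuclideanSpace ℝ (Fin n),
      u i₀ x = 0 ∧ ∀ i, i ≠ i₀ → u i x < 0 := by
  obtain ⟨y, hy⟩ := hint
  have hyS : ∀ i, u i y ≤ 0 := interior_subset hy
  -- interior point satisfies strict inequalities
  have hystrict : ∀ i, u i y < 0 := by
    intro i
    rcases lt_or_eq_of_le (hyS i) with h | h
    · exact h
    · exfalso
      obtain ⟨a, b, hab⟩ := hnc i
      have hd : (u i).linear (a - b) ≠ 0 := by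
        have hl := (u i).linearMap_vsub a b
        simp only [vsub_eq_sub] at hl
        rw [hl]
        simpa using sub_ne_zero.mpr hab
      -- choose v with (u i).linear v > 0
      obtain ⟨v, hv⟩ : ∃ v, 0 < (u i).linear v := by
        rcases hd.lt_or_gt with h' | h'
        · exact ⟨b - a, by simpa using neg_pos.mpr h'⟩
        · exact ⟨a - b, h'⟩
      have hv0 : v ≠ 0 := by
        rintro rfl; simp at hv
      obtain ⟨ε, hε, hball⟩ := Metric.mem_nhds_iff.mp (mem_interior_iff_mem_nhds.mp hy)
      set c : ℝ := ε / (2 * ‖v‖) with hc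
      have hvnorm : 0 < ‖v‖ := norm_pos_iff.mpr hv0
      have hc0 : 0 < c := div_pos hε (by positivity)
      have hmem : y + c • v ∈ Metric.ball y ε := by
        rw [Metric.mem_ball, dist_eq_norm]
        have : y + c • v - y = c • v := by abel
        rw [this, norm_smul, Real.norm_eq_abs, abs_of_pos hc0, hc]
        rw [div_mul_eq_mul_div, mul_comm 2 ‖v‖, ← div_div]
        rw [mul_div_assoc, div_self (ne_of_gt hvnorm)]
        linarith
      have := hball hmem i
      have heval : u i (y + c • v) = u i y + c * (u i).linear v := by
        have h2 : y + c • v = c • v +ᵥ y := add_comm _ _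
        rw [h2, AffineMap.map_vadd, map_smul]
        simp [vadd_eq_add, smul_eq_mul, add_comm]
      rw [heval, h] at this
      nlinarith [mul_pos hc0 hv]
  intro i₀
  obtain ⟨z, hz₀, hz⟩ := hnr i₀
  set a : ℝ := u i₀ y with ha
  set b : ℝ := u i₀ z with hb
  have hab : a < 0 := hystrict i₀
  have hba : 0 < b - a := by linarith
  set t : ℝ := -a / (b - a) with htdef
  have ht0 : 0 < t := div_pos (by linarith) hba
  have ht1 : t < 1 := by
    rw [htdef, div_lt_one hba]; linarith
  refine ⟨AffineMap.lineMap y z t, ?_, ?_⟩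
  · rw [AffineMap.apply_lineMap, AffineMap.lineMap_apply]
    simp only [vsub_eq_sub, vadd_eq_add, ← ha, ← hb, htdef]
    field_simp
    rw [smul_eq_mul, neg_mul, div_mul_cancel₀ a (ne_of_gt hba)]; ring
  · intro i hi
    have hiz : u i z ≤ 0 := hz i hi
    have hiy : u i y < 0 := hystrict i
    rw [AffineMap.apply_lineMap, AffineMap.lineMap_apply]
    simp only [vsub_eq_sub, vadd_eq_add, smul_eq_mul]
    nlinarith [mul_nonpos_of_nonneg_of_nonpos ht0.le hiz,
      mul_pos (sub_pos.mpr ht1) (neg_pos.mpr hiy)]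
end

section
/- Let Ω = ⋂_{i∈I} {u_i ≤ 0} be a compact convex polytope in ℝⁿ with non-empty interior, with no redundant inequalities. Then for each i₀ ∈ I, the set {u_{i₀} = 0} ∩ ⋂_{i≠i₀} {u_i < 0} is dense in Ω ∩ {u_{i₀} = 0}. -/
/-- Affine maps evaluated along a segment. -/
lemma affine_segment_eval {n : ℕ} (f : EuclideanSpace ℝ (Fin n) →ᵃ[ℝ] ℝ)
    (p q : EuclideanSpace ℝ (Fin n)) (t : ℝ) :
    f (p + t • (q - p)) = f p + t * (f q - f p) := by
  have h1 : f (t • (q - p) +ᵥ p) = f.linear (t • (q - p)) +ᵥ f p := f.map_vadd p _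
  have h2 : f.linear (q - p) = f q - f p := by
    simpa [vsub_eq_sub] using f.linearMap_vsub q p
  simpa [vadd_eq_add, map_smul, h2, add_comm, smul_eq_mul] using h1

/-- For a compact convex polytope `Ω = ⋂ᵢ {uᵢ ≤ 0}` with non-empty interior
and no redundant inequalities, for each `i₀` the set
`{u_{i₀} = 0} ∩ ⋂_{i ≠ i₀} {uᵢ < 0}` is dense in `Ω ∩ {u_{i₀} = 0}`. -/
theorem stmt_6 (n : ℕ) (I : Type*) [Fintype I]
    (u : I → (EuclideanSpace ℝ (Fin n) →ᵃ[ℝ] ℝ))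
    (hnc : ∀ i, ∃ x y, u i x ≠ u i y)
    (hcomp : IsCompact {x : EuclideanSpace ℝ (Fin n) | ∀ i, u i x ≤ 0})
    (hint : (interior {x : EuclideanSpace ℝ (Fin n) | ∀ i, u i x ≤ 0}).Nonempty)
    (hnr : ∀ i₀, ∃ x : EuclideanSpace ℝ (Fin n),
      0 < u i₀ x ∧ ∀ i, i ≠ i₀ → u i x ≤ 0) :
    ∀ i₀, {x : EuclideanSpace ℝ (Fin n) | (∀ i, u i x ≤ 0) ∧ u i₀ x = 0} ⊆
      closure {x : EuclideanSpace ℝ (Fin n) |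
        u i₀ x = 0 ∧ ∀ i, i ≠ i₀ → u i x < 0} := by
  classical
  obtain ⟨z, hz⟩ := hint
  -- interior point satisfies strict inequalities
  have hzlt : ∀ i, u i z < 0 := by
    intro i
    have hz0 : u i z ≤ 0 := interior_subset hz i
    rcases lt_or_eq_of_le hz0 with h | h
    · exact h
    exfalso
    obtain ⟨a, b, hab⟩ := hnc i
    have hlin : (u i).linear (a - b) ≠ 0 := by
      have := (u i).linearMap_vsub a b
      simp only [vsub_eq_sub] at this
      rw [this]
      exact sub_ne_zero.mpr hab
    obtain ⟨w, hw⟩ : ∃ w, 0 < (u i).linear w := by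
      rcases hlin.lt_or_gt with h' | h'
      · exact ⟨-(a - b), by simpa using neg_pos.mpr h'⟩
      · exact ⟨a - b, h'⟩
    obtain ⟨ε, hε, hball⟩ := Metric.isOpen_iff.mp isOpen_interior z hz
    have hwne : w ≠ 0 := by
      intro h0; rw [h0, map_zero] at hw; exact lt_irrefl 0 hw
    have hwnorm : 0 < ‖w‖ := norm_pos_iff.mpr hwne
    set t : ℝ := ε / (2 * ‖w‖) with ht
    have htpos : 0 < t := div_pos hε (by positivity)
    have hin : z + t • w ∈ interior {x : EuclideanSpace ℝ (Fin n) | ∀ i, u i x ≤ 0} := by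
      apply hball
      rw [Metric.mem_ball, dist_eq_norm]
      have hz2 : z + t • w - z = t • w := by abel
      rw [hz2, norm_smul, Real.norm_eq_abs, abs_of_pos htpos]
      rw [ht, div_mul_eq_mul_div, mul_comm 2 ‖w‖]
      rw [div_lt_iff₀ (by positivity)]
      nlinarith
    have hle : u i (z + t • w) ≤ 0 := interior_subset hin i
    have heq : u i (z + t • w) = u i z + t * (u i).linear w := by
      have h1 : u i (t • w +ᵥ z) = (u i).linear (t • w) +ᵥ u i z := (u i).map_vadd z _
      simpa [vadd_eq_add, map_smul, smul_eq_mul, add_comm] using h1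
    rw [heq, ← h] at hle
    nlinarith
  intro i₀ x hx
  obtain ⟨hxle, hx0⟩ := hx
  obtain ⟨y, hy0, hyle⟩ := hnr i₀
  -- build m on the hyperplane with all other constraints strict
  set c : ℝ := u i₀ z with hc
  set d : ℝ := u i₀ y with hd
  have hcneg : c < 0 := hzlt i₀
  have hdpos : 0 < d := hy0
  set s : ℝ := -c / (d - c) with hs
  have hdc : 0 < d - c := by linarith
  have hs0 : 0 < s := div_pos (by linarith) hdc
  have hs1 : s < 1 := by
    rw [hs, div_lt_one hdc]; linarith
  set m : EuclideanSpace ℝ (Fin n) := z + s • (y - z) with hm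
  have hm0 : u i₀ m = 0 := by
    rw [hm, affine_segment_eval]
    rw [← hd, ← hc, hs]
    field_simp
    ring
  have hmlt : ∀ i, i ≠ i₀ → u i m < 0 := by
    intro i hi
    rw [hm, affine_segment_eval]
    have h1 : u i z < 0 := hzlt i
    have h2 : u i y ≤ 0 := hyle i hi
    nlinarith
  -- now x is a limit of points on segment from x to m
  have htend : Filter.Tendsto (fun t : ℝ => x + t • (m - x)) (nhdsWithin 0 (Set.Ioi 0)) (nhds x) := by
    have hcont : Continuous fun t : ℝ => x + t • (m - x) :=
      continuous_const.add (continuous_id.smul continuous_const)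
    have := hcont.tendsto' 0 x (by simp)
    exact this.mono_left nhdsWithin_le_nhds
  refine mem_closure_of_tendsto htend ?_
  filter_upwards [Ioo_mem_nhdsGT_of_mem (by constructor <;> norm_num : (0:ℝ) ∈ Set.Ico 0 1)]
    with t ht
  obtain ⟨ht0, ht1⟩ := ht
  constructor
  · rw [affine_segment_eval, hx0, hm0]; ring
  · intro i hi
    rw [affine_segment_eval]
    have h1 : u i x ≤ 0 := hxle i
    have h2 : u i m < 0 := hmlt i hi
    nlinarith
end

section
/- Let Ω = ⋂_{i∈I} {u_i ≤ 0} be a compact convex polytope in ℝⁿ with non-empty interior and define Ω_λ = {∑_{i∈I} e^{λ u_i} ≤ 1} for λ > λ₀. Then the union ⋃_{λ > λ₀} Ω_λ equals the interior of Ω, i.e. ⋂_{i∈I} {u_i < 0}. -/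
/-- The union of the smoothed domains `Ω_λ = {∑ᵢ e^{λ uᵢ} ≤ 1}` over
`λ > λ₀` equals the interior of the polytope, i.e. `⋂ᵢ {uᵢ < 0}`. -/
theorem stmt_9 (n : ℕ) (I : Type*) [Fintype I]
    (u : I → (EuclideanSpace ℝ (Fin n) →ᵃ[ℝ] ℝ))
    (hnc : ∀ i, ∃ x y, u i x ≠ u i y)
    (hcomp : IsCompact {x : EuclideanSpace ℝ (Fin n) | ∀ i, u i x ≤ 0})
    (hint : (interior {x : EuclideanSpace ℝ (Fin n) | ∀ i, u i x ≤ 0}).Nonempty)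
    (lam₀ : ℝ) (hlam₀ : 0 < lam₀)
    (hne : {x : EuclideanSpace ℝ (Fin n) |
      ∀ i, u i x ≤ -lam₀⁻¹ * Real.log (Fintype.card I)}.Nonempty) :
    (⋃ lam > lam₀, {x : EuclideanSpace ℝ (Fin n) | ∑ i, Real.exp (lam * u i x) ≤ 1}) =
      {x : EuclideanSpace ℝ (Fin n) | ∀ i, u i x < 0} := by
  -- First: every i has a distinct companion j (otherwise the polytope is a half-space,
  -- which is noncompact).
  have hcard : ∀ i : I, ∃ j : I, j ≠ i := by
    intro i
    by_contra h
    push_neg at h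
    obtain ⟨a, b, hab⟩ := hnc i
    obtain ⟨x₀, hx₀⟩ := hint
    have hx₀' : ∀ j, u j x₀ ≤ 0 := interior_subset hx₀
    have hlin : (u i).linear (a - b) = u i a - u i b := (u i).linearMap_vsub a b
    have hne0 : (u i).linear (a - b) ≠ 0 := by
      rw [hlin]; exact sub_ne_zero.mpr hab
    -- choose direction w with linear part negative
    obtain ⟨w, hwneg⟩ : ∃ w : EuclideanSpace ℝ (Fin n), (u i).linear w < 0 := by
      rcases lt_or_gt_of_ne hne0 with hlt | hgt
      · exact ⟨a - b, hlt⟩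
      · exact ⟨-(a - b), by simpa using neg_neg_iff_pos.mpr hgt⟩
    have hw0 : w ≠ 0 := fun hw => by simp [hw] at hwneg
    obtain ⟨R, hR⟩ := isBounded_iff_forall_norm_le.mp hcomp.isBounded
    set t : ℝ := (|R| + ‖x₀‖ + 1) / ‖w‖ with ht
    have hwpos : (0:ℝ) < ‖w‖ := norm_pos_iff.mpr hw0
    have htpos : 0 < t := by positivity
    have hy : (x₀ + t • w) ∈ {x : EuclideanSpace ℝ (Fin n) | ∀ j, u j x ≤ 0} := by
      intro j
      have hj := h j
      subst hj
      have : u j (x₀ + t • w) = u j x₀ + t * (u j).linear w := by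
        have := (u j).map_vadd x₀ (t • w)
        simpa [vadd_eq_add, add_comm, map_smul, smul_eq_mul] using this
      rw [this]
      have : t * (u j).linear w ≤ 0 := mul_nonpos_of_nonneg_of_nonpos htpos.le hwneg.le
      linarith [hx₀' j]
    have hnorm := hR _ hy
    have h1 : ‖x₀ + t • w‖ ≥ t * ‖w‖ - ‖x₀‖ := by
      have htri : ‖t • w‖ ≤ ‖x₀ + t • w‖ + ‖x₀‖ := by
        simpa using norm_add_le (x₀ + t • w) (-x₀)
      have h2 : ‖t • w‖ = t * ‖w‖ := by
        rw [norm_smul, Real.norm_of_nonneg htpos.le]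
      linarith
    have h3 : t * ‖w‖ = |R| + ‖x₀‖ + 1 := by
      rw [ht, div_mul_cancel₀ _ hwpos.ne']
    have : |R| < R := by
      have := abs_nonneg R
      nlinarith [le_abs_self R]
    exact absurd this (not_lt.mpr (le_abs_self R))
  ext x
  simp only [Set.mem_iUnion, Set.mem_setOf_eq, exists_prop]
  constructor
  · rintro ⟨lam, hlam, hsum⟩ i
    have hlp : 0 < lam := hlam₀.trans hlam
    obtain ⟨j, hj⟩ := hcard i
    have h1 : Real.exp (lam * u i x) < ∑ k, Real.exp (lam * u k x) :=
      Finset.single_lt_sum (f := fun k => Real.exp (lam * u k x)) hj (Finset.mem_univ i) (Finset.mem_univ j)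
        (Real.exp_pos _) (fun k _ _ => (Real.exp_pos _).le)
    have h2 : Real.exp (lam * u i x) < 1 := h1.trans_le hsum
    have h3 : lam * u i x < 0 := by
      by_contra hcon
      exact absurd (Real.one_le_exp (not_lt.mp hcon)) (not_le.mpr h2)
    nlinarith
  · intro hx
    by_cases hI : Nonempty I
    · set m : ℝ := Finset.univ.sup' (Finset.univ_nonempty) (fun i => u i x) with hm
      obtain ⟨i₀, _, hi₀⟩ := Finset.exists_mem_eq_sup' (Finset.univ_nonempty)
        (fun i : I => u i x)
      have hmneg : m < 0 := by rw [hm, hi₀]; exact hx i₀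
      have hmle : ∀ i, u i x ≤ m := fun i =>
        Finset.le_sup' (fun i => u i x) (Finset.mem_univ i)
      set c : ℝ := (Fintype.card I : ℝ) with hc
      have hc1 : (1:ℝ) ≤ c := by
        rw [hc]; exact_mod_cast Fintype.card_pos
      set lam : ℝ := max (lam₀ + 1) (Real.log c / (-m)) with hlamdef
      have hlam : lam₀ < lam := lt_of_lt_of_le (by linarith) (le_max_left _ _)
      have hlp : 0 < lam := hlam₀.trans hlam
      refine ⟨lam, hlam, ?_⟩
      have key : lam * m ≤ -Real.log c := by
        have h1 : Real.log c / (-m) ≤ lam := le_max_right _ _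
        have h2 : 0 < -m := by linarith
        have := (div_le_iff₀ h2).mp h1
        nlinarith
      have hexp : Real.exp (lam * m) ≤ c⁻¹ := by
        calc Real.exp (lam * m) ≤ Real.exp (-Real.log c) := Real.exp_le_exp.mpr key
          _ = c⁻¹ := by rw [Real.exp_neg, Real.exp_log (by linarith)]
      calc ∑ i, Real.exp (lam * u i x)
          ≤ ∑ _i : I, Real.exp (lam * m) := Finset.sum_le_sum (fun i _ =>
            Real.exp_le_exp.mpr (by nlinarith [hmle i]))
        _ = c * Real.exp (lam * m) := by
            rw [Finset.sum_const, Finset.card_univ, nsmul_eq_mul, hc]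
        _ ≤ c * c⁻¹ := by nlinarith [Real.exp_pos (lam * m)]
        _ = 1 := mul_inv_cancel₀ (by linarith)
    · refine ⟨lam₀ + 1, by linarith, ?_⟩
      have : IsEmpty I := not_nonempty_iff.mp hI
      simp
end

section
/- Let σ ∈ (1,∞) and τ ∈ (1,σ). Let Q₀ be an (n-1)-dimensional dyadic cube and V ≥ 0 a continuous function. Define W₀(x) = sup over dyadic cubes Q with x ∈ Q ⊆ Q₀ of (|Q|^{-1} ∫_Q V^σ)^{1/σ}, and let Λ = sup over dyadic cubes Q ⊇ Q₀ of (|Q|^{-1} ∫_Q V^σ)^{1/σ} < ∞. Set W = max{Λ, W₀}. Then (|Q₀|^{-1} ∫_{Q₀} W^τ)^{1/τ} ≤ C Λ, where C depends only on n, σ, τ. -/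
open MeasureTheory
open scoped ENNReal

/-- A dyadic cube in `ℝ^d` (identified with `ℝ^{d} × {0} ⊂ ℝ^{d+1}`): a set of the form
`∏_k [2^m j_k, 2^m (j_k + 1)]` with `m ∈ ℤ`, `j_k ∈ ℤ`. -/
def IsDyadicCube {d : ℕ} (Q : Set (EuclideanSpace ℝ (Fin d))) : Prop :=
  ∃ (m : ℤ) (j : Fin d → ℤ), Q = {x : EuclideanSpace ℝ (Fin d) |
    ∀ k, (2 : ℝ) ^ m * j k ≤ x k ∧ x k ≤ (2 : ℝ) ^ m * (j k + 1)}

/-- The `L^σ` average `(|Q|⁻¹ ∫_Q V^σ)^{1/σ}` of a function over a cube. -/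
noncomputable def cubeLpAvg {d : ℕ} (V : EuclideanSpace ℝ (Fin d) → ℝ) (σ : ℝ)
    (Q : Set (EuclideanSpace ℝ (Fin d))) : ℝ :=
  ((volume Q).toReal⁻¹ * ∫ x in Q, V x ^ σ) ^ (1 / σ)



/-- closed dyadic cube -/
def Qc (d : ℕ) (m : ℤ) (j : Fin d → ℤ) : Set (EuclideanSpace ℝ (Fin d)) :=
  {x | ∀ k, (2 : ℝ) ^ m * j k ≤ x k ∧ x k ≤ (2 : ℝ) ^ m * (j k + 1)}

/-- open dyadic cube -/
def Qo (d : ℕ) (m : ℤ) (j : Fin d → ℤ) : Set (EuclideanSpace ℝ (Fin d)) :=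
  {x | ∀ k, (2 : ℝ) ^ m * j k < x k ∧ x k < (2 : ℝ) ^ m * (j k + 1)}

lemma isDyadicCube_iff {Q : Set (EuclideanSpace ℝ (Fin d))} :
    IsDyadicCube Q ↔ ∃ m j, Q = Qc d m j := Iff.rfl

lemma Qc_eq_preimage (m : ℤ) (j : Fin d → ℤ) :
    Qc d m j = (MeasurableEquiv.toLp 2 (Fin d → ℝ)).symm ⁻¹'
      (Set.univ.pi fun k => Set.Icc ((2:ℝ)^m * j k) ((2:ℝ)^m * (j k + 1))) := by
  ext x
  simp only [Qc, Set.mem_preimage, Set.mem_pi, Set.mem_univ, Set.mem_Icc, true_implies,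
    Set.mem_setOf_eq]
  rfl

lemma volume_Qc (m : ℤ) (j : Fin d → ℤ) :
    volume (Qc d m j) = ENNReal.ofReal ((2:ℝ)^m) ^ d := by
  rw [Qc_eq_preimage,
    (EuclideanSpace.volume_preserving_symm_measurableEquiv_toLp (Fin d)).measure_preimage
      (MeasurableSet.univ_pi fun k => measurableSet_Icc).nullMeasurableSet,
    volume_pi_pi]
  have : ∀ k : Fin d, (2:ℝ)^m * (j k + 1) - 2^m * j k = 2^m := fun k => by ring
  simp only [Real.volume_Icc, this, Finset.prod_const, Finset.card_univ, Fintype.card_fin]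

lemma measurableSet_Qc (m : ℤ) (j : Fin d → ℤ) : MeasurableSet (Qc d m j) := by
  rw [Qc_eq_preimage]
  exact (MeasurableEquiv.toLp 2 (Fin d → ℝ)).symm.measurable
    (MeasurableSet.univ_pi fun k => measurableSet_Icc)

lemma isCompact_Qc (m : ℤ) (j : Fin d → ℤ) : IsCompact (Qc d m j) := by
  have : Qc d m j = (EuclideanSpace.equiv (Fin d) ℝ).toHomeomorph ⁻¹'
      (Set.univ.pi fun k => Set.Icc ((2:ℝ)^m * j k) ((2:ℝ)^m * (j k + 1))) := by
    ext x
    simp only [Qc, Set.mem_preimage, Set.mem_pi, Set.mem_univ, Set.mem_Icc, true_implies,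
      Set.mem_setOf_eq]
    rfl
  rw [this, Homeomorph.isCompact_preimage]
  exact isCompact_univ_pi fun k => isCompact_Icc



lemma two_zpow_pos (m : ℤ) : (0:ℝ) < 2 ^ m := zpow_pos two_pos m

lemma zpow_scale {m m' : ℤ} (h : m ≤ m') (b : ℤ) :
    (2:ℝ)^m' * b = 2^m * ((2^(m'-m).toNat * b : ℤ) : ℝ) := by
  have he : ((m'-m).toNat : ℤ) = m' - m := Int.toNat_of_nonneg (by omega)
  have : (2:ℝ)^m' = 2^m * 2^((m'-m).toNat : ℤ) := by
    rw [← zpow_add₀ (two_ne_zero), he]; ring_nf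
  rw [this]
  push_cast
  rw [zpow_natCast]
  ring

/-- 1D overlap: if the open intervals overlap and `m ≤ m'`, the scale-`m` closed
interval is inside the scale-`m'` one. -/
lemma interval_nest {m m' : ℤ} (h : m ≤ m') {a b : ℤ} {x : ℝ}
    (h1 : (2:ℝ)^m * a < x) (h2 : x < (2:ℝ)^m * (a+1))
    (h3 : (2:ℝ)^m' * b < x) (h4 : x < (2:ℝ)^m' * (b+1)) :
    (2:ℝ)^m' * b ≤ 2^m * a ∧ (2:ℝ)^m * (a+1) ≤ 2^m' * (b+1) := by
  have hp := two_zpow_pos m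
  obtain ⟨A, hA⟩ : ∃ A : ℤ, (2:ℝ)^m' * b = 2^m * A := ⟨_, zpow_scale h b⟩
  obtain ⟨B, hB⟩ : ∃ B : ℤ, (2:ℝ)^m' * ((b:ℝ)+1) = 2^m * B :=
    ⟨_, by rw [show ((b:ℝ)+1) = ((b+1:ℤ):ℝ) by push_cast; ring]; exact zpow_scale h (b+1)⟩
  rw [hA] at h3
  rw [hB] at h4
  rw [hA, hB]
  have hAa' : A ≤ a := by
    have h5 := (mul_lt_mul_iff_right₀ hp).mp (h3.trans h2)
    have : A < a + 1 := by exact_mod_cast h5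
    omega
  have haB' : a + 1 ≤ B := by
    have h5 := (mul_lt_mul_iff_right₀ hp).mp (h1.trans h4)
    have : a < B := by exact_mod_cast h5
    omega
  constructor
  · exact mul_le_mul_of_nonneg_left (by exact_mod_cast hAa') hp.le
  · exact mul_le_mul_of_nonneg_left (by exact_mod_cast haB') hp.le

lemma Qo_subset_Qc (m : ℤ) (j : Fin d → ℤ) : Qo d m j ⊆ Qc d m j :=
  fun x hx k => ⟨(hx k).1.le, (hx k).2.le⟩

/-- overlapping open cubes nest -/
lemma Qc_subset_of_overlap {m m' : ℤ} (h : m ≤ m') {j j' : Fin d → ℤ}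
    (hne : (Qo d m j ∩ Qo d m' j').Nonempty) : Qc d m j ⊆ Qc d m' j' := by
  obtain ⟨x, hx, hx'⟩ := hne
  intro y hy k
  obtain ⟨hl, hr⟩ := interval_nest h (hx k).1 (hx k).2 (hx' k).1 (hx' k).2
  exact ⟨hl.trans (hy k).1, (hy k).2.trans hr⟩

/-- corner point inequalities from inclusion -/
lemma corner_ineq {m m' : ℤ} {j j' : Fin d → ℤ} (hs : Qc d m j ⊆ Qc d m' j') (k : Fin d) :
    (2:ℝ)^m' * j' k ≤ 2^m * j k ∧ (2:ℝ)^m * (j k + 1) ≤ 2^m' * (j' k + 1) := by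
  have hlo : (WithLp.toLp 2 (fun k => (2:ℝ)^m * j k) : EuclideanSpace ℝ (Fin d)) ∈ Qc d m j := by
    intro i
    constructor
    · show (2:ℝ)^m * j i ≤ 2^m * j i; exact le_refl _
    · show (2:ℝ)^m * j i ≤ 2^m * (j i + 1)
      have := two_zpow_pos m; nlinarith
  have hhi : (WithLp.toLp 2 (fun k => (2:ℝ)^m * (j k + 1)) : EuclideanSpace ℝ (Fin d)) ∈ Qc d m j := by
    intro i
    constructor
    · show (2:ℝ)^m * j i ≤ 2^m * (j i + 1)
      have := two_zpow_pos m; nlinarith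
    · show (2:ℝ)^m * (j i + 1) ≤ 2^m * (j i + 1); exact le_refl _
  exact ⟨(hs hlo k).1, (hs hhi k).2⟩

lemma scale_le_of_subset (hd : 0 < d) {m m' : ℤ} {j j' : Fin d → ℤ}
    (hs : Qc d m j ⊆ Qc d m' j') : m ≤ m' := by
  obtain ⟨h1, h2⟩ := corner_ineq hs ⟨0, hd⟩
  have : (2:ℝ)^m ≤ 2^m' := by nlinarith
  exact_mod_cast (zpow_le_zpow_iff_right₀ (by norm_num : (1:ℝ) < 2)).mp this

lemma Qc_inj (hd : 0 < d) {m m' : ℤ} {j j' : Fin d → ℤ}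
    (h : Qc d m j = Qc d m' j') : m = m' ∧ j = j' := by
  have hmm' : m = m' :=
    le_antisymm (scale_le_of_subset hd h.subset) (scale_le_of_subset hd h.symm.subset)
  subst hmm'
  refine ⟨rfl, funext fun k => ?_⟩
  have h1 := (corner_ineq h.subset k).1
  have h2 := (corner_ineq h.symm.subset k).1
  have hp := two_zpow_pos m
  have : (j k : ℝ) = j' k := le_antisymm (by nlinarith) (by nlinarith)
  exact_mod_cast this

lemma volume_Qo (m : ℤ) (j : Fin d → ℤ) :
    volume (Qo d m j) = ENNReal.ofReal ((2:ℝ)^m) ^ d := by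
  have : Qo d m j = (MeasurableEquiv.toLp 2 (Fin d → ℝ)).symm ⁻¹'
      (Set.univ.pi fun k => Set.Ioo ((2:ℝ)^m * j k) ((2:ℝ)^m * (j k + 1))) := by
    ext x
    simp only [Qo, Set.mem_preimage, Set.mem_pi, Set.mem_univ, Set.mem_Ioo, true_implies,
      Set.mem_setOf_eq]
    rfl
  rw [this,
    (EuclideanSpace.volume_preserving_symm_measurableEquiv_toLp (Fin d)).measure_preimage
      (MeasurableSet.univ_pi fun k => measurableSet_Ioo).nullMeasurableSet,
    volume_pi_pi]
  have he : ∀ k : Fin d, (2:ℝ)^m * (j k + 1) - 2^m * j k = 2^m := fun k => by ring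
  simp only [Real.volume_Ioo, he, Finset.prod_const, Finset.card_univ, Fintype.card_fin]

lemma measurableSet_Qo (m : ℤ) (j : Fin d → ℤ) : MeasurableSet (Qo d m j) := by
  have : Qo d m j = (MeasurableEquiv.toLp 2 (Fin d → ℝ)).symm ⁻¹'
      (Set.univ.pi fun k => Set.Ioo ((2:ℝ)^m * j k) ((2:ℝ)^m * (j k + 1))) := by
    ext x
    simp only [Qo, Set.mem_preimage, Set.mem_pi, Set.mem_univ, Set.mem_Ioo, true_implies,
      Set.mem_setOf_eq]
    rfl
  rw [this]
  exact (MeasurableEquiv.toLp 2 (Fin d → ℝ)).symm.measurable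
    (MeasurableSet.univ_pi fun k => measurableSet_Ioo)

lemma volume_Qc_ne_top (m : ℤ) (j : Fin d → ℤ) : volume (Qc d m j) ≠ ⊤ := by
  rw [volume_Qc]; exact ENNReal.pow_ne_top ENNReal.ofReal_ne_top

lemma volume_Qc_pos (m : ℤ) (j : Fin d → ℤ) : 0 < volume (Qc d m j) := by
  rw [volume_Qc]
  exact ENNReal.pow_pos (by simp [ENNReal.ofReal_pos, two_zpow_pos m]) d

lemma volume_Qc_toReal_pos (m : ℤ) (j : Fin d → ℤ) : 0 < (volume (Qc d m j)).toReal :=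
  ENNReal.toReal_pos (volume_Qc_pos m j).ne' (volume_Qc_ne_top m j)

lemma volume_Qc_diff_Qo (m : ℤ) (j : Fin d → ℤ) : volume (Qc d m j \ Qo d m j) = 0 := by
  rw [measure_diff (Qo_subset_Qc m j) (measurableSet_Qo m j).nullMeasurableSet
    (by rw [volume_Qo]; exact ENNReal.pow_ne_top ENNReal.ofReal_ne_top),
    volume_Qc, volume_Qo, tsub_self]

/-- distinct cubes are a.e. disjoint -/
lemma aedisjoint_Qc {m m' : ℤ} {j j' : Fin d → ℤ}
    (hne : Qc d m j ≠ Qc d m' j')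
    (hmax : ¬ Qc d m j ⊆ Qc d m' j') (hmax' : ¬ Qc d m' j' ⊆ Qc d m j) :
    volume (Qc d m j ∩ Qc d m' j') = 0 := by
  have hsub : Qc d m j ∩ Qc d m' j' ⊆
      (Qc d m j \ Qo d m j) ∪ (Qc d m' j' \ Qo d m' j') ∪ (Qo d m j ∩ Qo d m' j') := by
    intro x hx
    by_cases h1 : x ∈ Qo d m j
    · by_cases h2 : x ∈ Qo d m' j'
      · exact Or.inr ⟨h1, h2⟩
      · exact Or.inl (Or.inr ⟨hx.2, h2⟩)
    · exact Or.inl (Or.inl ⟨hx.1, h1⟩)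
  have hoo : Qo d m j ∩ Qo d m' j' = ∅ := by
    by_contra h
    rcases Set.nonempty_iff_ne_empty.mpr h with ⟨x, hx1, hx2⟩
    rcases le_total m m' with hmm | hmm
    · exact hmax (Qc_subset_of_overlap hmm ⟨x, hx1, hx2⟩)
    · exact hmax' (Qc_subset_of_overlap hmm ⟨x, hx2, hx1⟩)
  refine measure_mono_null hsub ?_
  rw [hoo] at *
  refine measure_union_null (measure_union_null ?_ ?_) ?_ <;>
    simp [volume_Qc_diff_Qo]



lemma Qc_eq_of_subset_same_scale {m : ℤ} {j j' : Fin d → ℤ}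
    (h : Qc d m j ⊆ Qc d m j') : Qc d m j = Qc d m j' := by
  have : j = j' := by
    funext k
    have h1 := (corner_ineq h k).1
    have h2 := (corner_ineq h k).2
    have hp := two_zpow_pos m
    have : (j k : ℝ) = j' k := le_antisymm (by nlinarith) (by nlinarith)
    exact_mod_cast this
  rw [this]

/-- The dyadic weak-type covering bound. -/
lemma weak_type (hd : 0 < d) (m₀ : ℤ) (j₀ : Fin d → ℤ) (g : EuclideanSpace ℝ (Fin d) → ℝ)
    (hg : ∀ x, 0 ≤ g x) (hgi : IntegrableOn g (Qc d m₀ j₀)) (t : ℝ) :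
    ENNReal.ofReal t * volume (⋃ p ∈ {p : ℤ × (Fin d → ℤ) | Qc d p.1 p.2 ⊆ Qc d m₀ j₀ ∧
        t * (volume (Qc d p.1 p.2)).toReal < ∫ x in Qc d p.1 p.2, g x}, Qc d p.1 p.2) ≤
      ENNReal.ofReal (∫ x in Qc d m₀ j₀, g x) := by
  set A : Set (ℤ × (Fin d → ℤ)) := {p | Qc d p.1 p.2 ⊆ Qc d m₀ j₀ ∧
    t * (volume (Qc d p.1 p.2)).toReal < ∫ x in Qc d p.1 p.2, g x} with hA
  set M : Set (ℤ × (Fin d → ℤ)) :=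
    {p ∈ A | ∀ q ∈ A, Qc d p.1 p.2 ⊆ Qc d q.1 q.2 → Qc d p.1 p.2 = Qc d q.1 q.2} with hM
  -- every cube in A lies in a maximal one
  have step1 : ∀ p ∈ A, ∃ q ∈ M, Qc d p.1 p.2 ⊆ Qc d q.1 q.2 := by
    intro p hp
    set s : Set ℤ := {m' | ∃ j', (m', j') ∈ A ∧ Qc d p.1 p.2 ⊆ Qc d m' j'} with hs
    have hsne : p.1 ∈ s := ⟨p.2, hp, subset_rfl⟩
    have hsbdd : ∀ z ∈ s, z ≤ m₀ := by
      rintro z ⟨j', hj', -⟩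
      exact scale_le_of_subset hd hj'.1
    obtain ⟨m', ⟨j', hj'A, hj'sub⟩, hmax⟩ :=
      Int.exists_greatest_of_bdd ⟨m₀, hsbdd⟩ ⟨p.1, hsne⟩
    refine ⟨(m', j'), ⟨hj'A, ?_⟩, hj'sub⟩
    rintro ⟨mr, jr⟩ hr hsub
    have hr1 : mr ∈ s := ⟨jr, hr, hj'sub.trans hsub⟩
    have : mr ≤ m' := hmax _ hr1
    have : m' = mr := le_antisymm (scale_le_of_subset hd hsub) this
    subst this
    exact Qc_eq_of_subset_same_scale hsub
  have hUnion : (⋃ p ∈ A, Qc d p.1 p.2) = ⋃ p ∈ M, Qc d p.1 p.2 := by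
    apply Set.Subset.antisymm
    · intro x hx
      obtain ⟨p, hp, hxp⟩ := Set.mem_iUnion₂.mp hx
      obtain ⟨q, hq, hsub⟩ := step1 p hp
      exact Set.mem_biUnion hq (hsub hxp)
    · exact Set.biUnion_subset_biUnion_left (fun q hq => hq.1)
  have hMpair : M.Pairwise (Function.onFun (AEDisjoint volume) fun p : ℤ × (Fin d → ℤ) => Qc d p.1 p.2) := by
    rintro p hp q hq hne
    have hset : Qc d p.1 p.2 ≠ Qc d q.1 q.2 := by
      intro h
      obtain ⟨h1, h2⟩ := Qc_inj hd h
      exact hne (Prod.ext h1 h2)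
    have h1 : ¬ Qc d p.1 p.2 ⊆ Qc d q.1 q.2 := fun h => hset (hp.2 q hq.1 h)
    have h2 : ¬ Qc d q.1 q.2 ⊆ Qc d p.1 p.2 := fun h => hset (hq.2 p hp.1 h).symm
    exact aedisjoint_Qc hset h1 h2
  have hMcnt : M.Countable := Set.to_countable M
  have hMmeas : ∀ p ∈ M, NullMeasurableSet (Qc d p.1 p.2) :=
    fun p _ => (measurableSet_Qc p.1 p.2).nullMeasurableSet
  rw [hUnion, measure_biUnion₀ hMcnt hMpair hMmeas]
  -- bound the sum by the integral over the union
  have key : ∀ p ∈ M, ENNReal.ofReal t * volume (Qc d p.1 p.2) ≤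
      ∫⁻ x in Qc d p.1 p.2, ENNReal.ofReal (g x) := by
    intro p hp
    have hle := hp.1.2.le
    have hint : IntegrableOn g (Qc d p.1 p.2) := hgi.mono_set hp.1.1
    calc ENNReal.ofReal t * volume (Qc d p.1 p.2)
        = ENNReal.ofReal (t * (volume (Qc d p.1 p.2)).toReal) := by
          rw [ENNReal.ofReal_mul' (ENNReal.toReal_nonneg),
            ENNReal.ofReal_toReal (volume_Qc_ne_top p.1 p.2)]
      _ ≤ ENNReal.ofReal (∫ x in Qc d p.1 p.2, g x) := ENNReal.ofReal_le_ofReal hle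
      _ = ∫⁻ x in Qc d p.1 p.2, ENNReal.ofReal (g x) :=
          ofReal_integral_eq_lintegral_ofReal hint (Filter.Eventually.of_forall hg)
  calc ENNReal.ofReal t * ∑' p : M, volume (Qc d (p:ℤ × (Fin d → ℤ)).1 p.1.2)
      = ∑' p : M, ENNReal.ofReal t * volume (Qc d (p:ℤ × (Fin d → ℤ)).1 p.1.2) :=
        ENNReal.tsum_mul_left.symm
    _ ≤ ∑' p : M, ∫⁻ x in Qc d (p:ℤ × (Fin d → ℤ)).1 p.1.2, ENNReal.ofReal (g x) :=
        ENNReal.tsum_le_tsum (fun p => key p p.2)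
    _ = ∫⁻ x in ⋃ p ∈ M, Qc d p.1 p.2, ENNReal.ofReal (g x) :=
        (lintegral_biUnion₀ hMcnt hMmeas hMpair _).symm
    _ ≤ ∫⁻ x in Qc d m₀ j₀, ENNReal.ofReal (g x) := by
        apply lintegral_mono_set
        exact Set.iUnion₂_subset (fun p hp => hp.1.1)
    _ = ENNReal.ofReal (∫ x in Qc d m₀ j₀, g x) :=
        (ofReal_integral_eq_lintegral_ofReal hgi (Filter.Eventually.of_forall hg)).symm



lemma cubeLpAvg_nonneg' {V : EuclideanSpace ℝ (Fin d) → ℝ} (hV : ∀ x, 0 ≤ V x) {σ : ℝ}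
    {Q : Set (EuclideanSpace ℝ (Fin d))} : 0 ≤ cubeLpAvg V σ Q :=
  Real.rpow_nonneg (mul_nonneg (inv_nonneg.2 ENNReal.toReal_nonneg)
    (integral_nonneg fun x => Real.rpow_nonneg (hV x) _)) _

lemma exists_mem_gt_of_lt_sSup {s : Set ℝ} {b : ℝ} (hb : 0 ≤ b) (h : b < sSup s) :
    ∃ y ∈ s, b < y := by
  by_contra hc
  push_neg at hc
  exact absurd (Real.sSup_le hc hb) (not_le.mpr h)

lemma avg_mul_vol {V : EuclideanSpace ℝ (Fin d) → ℝ} {σ : ℝ} (m : ℤ) (j : Fin d → ℤ) :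
    ((volume (Qc d m j)).toReal⁻¹ * ∫ x in Qc d m j, V x ^ σ) * (volume (Qc d m j)).toReal
      = ∫ x in Qc d m j, V x ^ σ := by
  have hvpos := volume_Qc_toReal_pos m j
  field_simp

/-- from `b < cubeLpAvg V σ Q` extract the integral inequality -/
lemma lt_integral_of_lt_avg {V : EuclideanSpace ℝ (Fin d) → ℝ} (hV : ∀ x, 0 ≤ V x)
    {σ : ℝ} (hσ : 0 < σ) (m : ℤ) (j : Fin d → ℤ) {b : ℝ} (hb0 : 0 ≤ b)
    (hb : b < cubeLpAvg V σ (Qc d m j)) :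
    b ^ σ * (volume (Qc d m j)).toReal < ∫ x in Qc d m j, V x ^ σ := by
  have hvpos := volume_Qc_toReal_pos m j
  set a := (volume (Qc d m j)).toReal⁻¹ * ∫ x in Qc d m j, V x ^ σ with ha
  have ha0 : 0 ≤ a := mul_nonneg (inv_nonneg.2 hvpos.le)
    (integral_nonneg fun x => Real.rpow_nonneg (hV x) _)
  have h1 : b ^ σ < (a ^ (1/σ)) ^ σ := Real.rpow_lt_rpow hb0 hb hσ
  have h2 : 1/σ * σ = 1 := by field_simp
  rw [← Real.rpow_mul ha0, h2, Real.rpow_one] at h1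
  have h3 := mul_lt_mul_of_pos_right h1 hvpos
  rwa [ha, avg_mul_vol] at h3

/-- from `cubeLpAvg V σ Q ≤ b` get the integral inequality -/
lemma integral_le_of_avg_le {V : EuclideanSpace ℝ (Fin d) → ℝ} (hV : ∀ x, 0 ≤ V x)
    {σ : ℝ} (hσ : 0 < σ) (m : ℤ) (j : Fin d → ℤ) {b : ℝ}
    (hb : cubeLpAvg V σ (Qc d m j) ≤ b) :
    ∫ x in Qc d m j, V x ^ σ ≤ b ^ σ * (volume (Qc d m j)).toReal := by
  have hvpos := volume_Qc_toReal_pos m j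
  set a := (volume (Qc d m j)).toReal⁻¹ * ∫ x in Qc d m j, V x ^ σ with ha
  have ha0 : 0 ≤ a := mul_nonneg (inv_nonneg.2 hvpos.le)
    (integral_nonneg fun x => Real.rpow_nonneg (hV x) _)
  have h1 : (a ^ (1/σ)) ^ σ ≤ b ^ σ :=
    Real.rpow_le_rpow (Real.rpow_nonneg ha0 _) hb hσ.le
  have h2 : 1/σ * σ = 1 := by field_simp
  rw [← Real.rpow_mul ha0, h2, Real.rpow_one] at h1
  have h3 := mul_le_mul_of_nonneg_right h1 hvpos.le
  rwa [ha, avg_mul_vol] at h3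



lemma main_pos {d : ℕ} (hd : 0 < d) {σ τ : ℝ} (hσ : 1 < σ) (hτ : 1 < τ) (hτσ : τ < σ)
    (m₀ : ℤ) (j₀ : Fin d → ℤ) {V : EuclideanSpace ℝ (Fin d) → ℝ}
    (hV : Continuous V) (hV0 : ∀ x, 0 ≤ V x) {Λ : ℝ} (hΛpos : 0 < Λ)
    (hgQ₀ : ∫ x in Qc d m₀ j₀, V x ^ σ ≤ Λ ^ σ * (volume (Qc d m₀ j₀)).toReal)
    (W : EuclideanSpace ℝ (Fin d) → ℝ) (hWΛ : ∀ x, Λ ≤ W x)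
    (hWsup : ∀ x ∈ Qc d m₀ j₀, ∀ b : ℝ, 0 ≤ b → Λ ≤ b → b < W x →
       ∃ m j, x ∈ Qc d m j ∧ Qc d m j ⊆ Qc d m₀ j₀ ∧ b < cubeLpAvg V σ (Qc d m j)) :
    ∫ x in Qc d m₀ j₀, W x ^ τ ≤
      Λ ^ τ * ((2:ℝ) ^ τ + (2:ℝ) ^ (2*τ - σ) / (1 - (2:ℝ) ^ (τ - σ))) *
        (volume (Qc d m₀ j₀)).toReal := by
  have hσ0 : (0:ℝ) < σ := by linarith
  have hτ0 : (0:ℝ) < τ := by linarith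
  have h2 : (0:ℝ) < 2 := two_pos
  have hΛ0 : (0:ℝ) ≤ Λ := hΛpos.le
  set q : ℝ := (2:ℝ) ^ (τ - σ) with hqdef
  have hq0 : 0 < q := Real.rpow_pos_of_pos two_pos _
  have hq1 : q < 1 := Real.rpow_lt_one_of_one_lt_of_neg one_lt_two (by linarith)
  set K : ℝ := (2:ℝ) ^ τ + (2:ℝ) ^ (2*τ - σ) / (1 - q) with hKdef
  have hK0 : 0 < K := by
    rw [hKdef]
    have h1 : (0:ℝ) < (2:ℝ) ^ τ := Real.rpow_pos_of_pos two_pos _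
    have h2' : (0:ℝ) ≤ (2:ℝ) ^ (2*τ - σ) / (1 - q) :=
      div_nonneg (Real.rpow_pos_of_pos two_pos _).le (by linarith)
    linarith
  have hg0 : ∀ x, 0 ≤ V x ^ σ := fun x => Real.rpow_nonneg (hV0 x) _
  have hgi : IntegrableOn (fun x => V x ^ σ) (Qc d m₀ j₀) volume :=
    (hV.rpow_const fun x => Or.inr hσ0.le).continuousOn.integrableOn_compact
      (isCompact_Qc m₀ j₀)
  have hvtop := volume_Qc_ne_top m₀ j₀
  have hWx0 : ∀ x, 0 ≤ W x := fun x => hΛ0.trans (hWΛ x)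
  -- the level sets
  set U : ℕ → Set (EuclideanSpace ℝ (Fin d)) := fun i =>
    ⋃ p ∈ {p : ℤ × (Fin d → ℤ) | Qc d p.1 p.2 ⊆ Qc d m₀ j₀ ∧
      ((2:ℝ) ^ i * Λ) ^ σ * (volume (Qc d p.1 p.2)).toReal < ∫ x in Qc d p.1 p.2, V x ^ σ},
      Qc d p.1 p.2 with hUdef
  have hUm : ∀ i, MeasurableSet (U i) := fun i =>
    MeasurableSet.biUnion (Set.to_countable _) fun p _ => measurableSet_Qc _ _
  have hUvol : ∀ i : ℕ, volume (U i) ≤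
      ENNReal.ofReal ((((2:ℝ) ^ i) ^ σ)⁻¹) * volume (Qc d m₀ j₀) := by
    intro i
    have hti : (0:ℝ) < ((2:ℝ) ^ i * Λ) ^ σ := Real.rpow_pos_of_pos (by positivity) _
    have hw := weak_type hd m₀ j₀ (fun x => V x ^ σ) hg0 hgi (((2:ℝ) ^ i * Λ) ^ σ)
    have hw' : ENNReal.ofReal (((2:ℝ) ^ i * Λ) ^ σ) * volume (U i) ≤
        ENNReal.ofReal (∫ x in Qc d m₀ j₀, V x ^ σ) := by
      simp only [hUdef]
      exact hw
    have h1 : ENNReal.ofReal (((2:ℝ) ^ i * Λ) ^ σ) * volume (U i) ≤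
        ENNReal.ofReal (Λ ^ σ * (volume (Qc d m₀ j₀)).toReal) :=
      le_trans hw' (ENNReal.ofReal_le_ofReal hgQ₀)
    have h0 : ENNReal.ofReal (((2:ℝ) ^ i * Λ) ^ σ) ≠ 0 := (ENNReal.ofReal_pos.2 hti).ne'
    have hΛσ : (0:ℝ) < Λ ^ σ := Real.rpow_pos_of_pos hΛpos _
    have h2σ : (0:ℝ) < ((2:ℝ) ^ i) ^ σ := Real.rpow_pos_of_pos (by positivity) _
    calc volume (U i)
        = (ENNReal.ofReal (((2:ℝ) ^ i * Λ) ^ σ))⁻¹ *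
            (ENNReal.ofReal (((2:ℝ) ^ i * Λ) ^ σ) * volume (U i)) := by
          rw [← mul_assoc, ENNReal.inv_mul_cancel h0 ENNReal.ofReal_ne_top, one_mul]
      _ ≤ (ENNReal.ofReal (((2:ℝ) ^ i * Λ) ^ σ))⁻¹ *
            ENNReal.ofReal (Λ ^ σ * (volume (Qc d m₀ j₀)).toReal) :=
          mul_le_mul_right h1 _
      _ = ENNReal.ofReal ((((2:ℝ) ^ i * Λ) ^ σ)⁻¹ * (Λ ^ σ * (volume (Qc d m₀ j₀)).toReal)) := by
          rw [← ENNReal.ofReal_inv_of_pos hti, ← ENNReal.ofReal_mul (inv_nonneg.2 hti.le)]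
      _ = ENNReal.ofReal ((((2:ℝ) ^ i) ^ σ)⁻¹ * (volume (Qc d m₀ j₀)).toReal) := by
          congr 1
          rw [Real.mul_rpow (by positivity) hΛ0]
          field_simp
      _ = ENNReal.ofReal ((((2:ℝ) ^ i) ^ σ)⁻¹) * volume (Qc d m₀ j₀) := by
          rw [ENNReal.ofReal_mul (inv_nonneg.2 h2σ.le), ENNReal.ofReal_toReal hvtop]
  -- the majorant
  set H : EuclideanSpace ℝ (Fin d) → ℝ≥0∞ := fun x =>
    ENNReal.ofReal ((2*Λ) ^ τ) +
      ∑' i : ℕ, ENNReal.ofReal (((2:ℝ) ^ (i+2) * Λ) ^ τ) * (U (i+1)).indicator 1 x with hHdef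
  have hHm : Measurable H := by
    refine Measurable.add (f := fun _ => ENNReal.ofReal ((2*Λ) ^ τ))
      (g := fun x => ∑' i : ℕ, ENNReal.ofReal (((2:ℝ) ^ (i+2) * Λ) ^ τ) * (U (i+1)).indicator 1 x)
      measurable_const ?_
    exact Measurable.ennreal_tsum fun i => (measurable_one.indicator (hUm (i+1))).const_mul _
  -- pointwise domination
  have hpt : ∀ x ∈ Qc d m₀ j₀, ENNReal.ofReal (W x ^ τ) ≤ H x := by
    intro x hx
    by_cases hcase : W x ≤ 2*Λ
    · refine le_trans ?_ le_self_add
      exact ENNReal.ofReal_le_ofReal (Real.rpow_le_rpow (hWx0 x) hcase hτ0.le)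
    · push_neg at hcase
      obtain ⟨N, hN⟩ := pow_unbounded_of_one_lt (W x / Λ) (one_lt_two (α := ℝ))
      classical
      set P : ℕ → Prop := fun k => 2 ^ (k+1) * Λ < W x with hPdef
      have hP0 : P 0 := by
        simp only [hPdef]
        norm_num
        exact hcase
      have hnotP : ∀ k, N ≤ k + 1 → ¬ P k := by
        intro k hk hPk
        have h1 : W x < 2 ^ N * Λ := (div_lt_iff₀ hΛpos).mp hN
        have hle : (2:ℝ) ^ N ≤ 2 ^ (k+1) := pow_le_pow_right₀ one_le_two hk
        have := hPk
        simp only [hPdef] at this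
        nlinarith
      set k := Nat.findGreatest P N with hkdef
      have hPk : P k := Nat.findGreatest_spec (Nat.zero_le N) hP0
      have hPk1 : ¬ P (k+1) := by
        by_cases hkN : k + 1 ≤ N
        · exact Nat.findGreatest_is_greatest (Nat.lt_succ_self k) hkN
        · exact hnotP (k+1) (by omega)
      have hb0 : (0:ℝ) ≤ 2 ^ (k+1) * Λ := by positivity
      have hone : (1:ℝ) ≤ 2 ^ (k+1) := one_le_pow₀ one_le_two
      have hΛb : Λ ≤ 2 ^ (k+1) * Λ := by nlinarith
      have hPk' : 2 ^ (k+1) * Λ < W x := hPk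
      obtain ⟨m, j, hxm, hsub, havg⟩ := hWsup x hx (2 ^ (k+1) * Λ) hb0 hΛb hPk'
      have hxU : x ∈ U (k+1) := by
        simp only [hUdef]
        exact Set.mem_biUnion (x := ((m, j) : ℤ × (Fin d → ℤ)))
          ⟨hsub, lt_integral_of_lt_avg hV0 hσ0 m j hb0 havg⟩ hxm
      have hWle : W x ≤ 2 ^ (k+2) * Λ := by
        have := not_lt.mp hPk1
        simpa [hPdef] using this
      calc ENNReal.ofReal (W x ^ τ) ≤ ENNReal.ofReal (((2:ℝ) ^ (k+2) * Λ) ^ τ) :=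
            ENNReal.ofReal_le_ofReal (Real.rpow_le_rpow (hWx0 x) hWle hτ0.le)
        _ = ENNReal.ofReal (((2:ℝ) ^ (k+2) * Λ) ^ τ) * (U (k+1)).indicator 1 x := by
            rw [Set.indicator_of_mem hxU, Pi.one_apply, mul_one]
        _ ≤ ∑' i : ℕ, ENNReal.ofReal (((2:ℝ) ^ (i+2) * Λ) ^ τ) * (U (i+1)).indicator 1 x :=
            ENNReal.le_tsum k
        _ ≤ H x := le_add_self
  -- the key exponent computation
  have hrpa : ∀ a b : ℝ, (2:ℝ) ^ a * (2:ℝ) ^ b = (2:ℝ) ^ (a+b) :=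
    fun a b => (Real.rpow_add h2 a b).symm
  have hkey : ∀ i : ℕ, ((2:ℝ) ^ (i+2) * Λ) ^ τ * ((((2:ℝ) ^ (i+1)) ^ σ)⁻¹) =
      (Λ ^ τ * (2:ℝ) ^ (2*τ - σ)) * q ^ i := by
    intro i
    have e1 : ((2:ℝ) ^ (i+2)) ^ τ = (2:ℝ) ^ (((i:ℝ) + 2) * τ) := by
      rw [← Real.rpow_natCast 2 (i+2), ← Real.rpow_mul h2.le]
      congr 1
      push_cast
      ring
    have e2 : (((2:ℝ) ^ (i+1)) ^ σ)⁻¹ = (2:ℝ) ^ (-(((i:ℝ) + 1) * σ)) := by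
      rw [← Real.rpow_natCast 2 (i+1), ← Real.rpow_mul h2.le, ← Real.rpow_neg h2.le]
      congr 1
      push_cast
      ring
    have e3 : q ^ i = (2:ℝ) ^ ((τ - σ) * (i:ℝ)) := by
      rw [hqdef, ← Real.rpow_natCast ((2:ℝ) ^ (τ - σ)) i, ← Real.rpow_mul h2.le]
    rw [Real.mul_rpow (by positivity) hΛ0, e1, e2, e3]
    calc (2:ℝ) ^ (((i:ℝ) + 2) * τ) * Λ ^ τ * (2:ℝ) ^ (-(((i:ℝ) + 1) * σ))
        = Λ ^ τ * ((2:ℝ) ^ (((i:ℝ) + 2) * τ) * (2:ℝ) ^ (-(((i:ℝ) + 1) * σ))) := by ring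
      _ = Λ ^ τ * (2:ℝ) ^ ((((i:ℝ) + 2) * τ) + (-(((i:ℝ) + 1) * σ))) := by rw [hrpa]
      _ = Λ ^ τ * (2:ℝ) ^ ((2*τ - σ) + (τ - σ) * (i:ℝ)) := by
          congr 1
          ring
      _ = Λ ^ τ * ((2:ℝ) ^ (2*τ - σ) * (2:ℝ) ^ ((τ - σ) * (i:ℝ))) := by rw [hrpa]
      _ = (Λ ^ τ * (2:ℝ) ^ (2*τ - σ)) * (2:ℝ) ^ ((τ - σ) * (i:ℝ)) := by ring
  -- per-term integral bound
  have ha0 : (0:ℝ) ≤ Λ ^ τ * (2:ℝ) ^ (2*τ - σ) :=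
    mul_nonneg (Real.rpow_nonneg hΛ0 _) (Real.rpow_pos_of_pos h2 _).le
  have hterm : ∀ i : ℕ,
      (∫⁻ x in Qc d m₀ j₀, ENNReal.ofReal (((2:ℝ) ^ (i+2) * Λ) ^ τ) * (U (i+1)).indicator 1 x) ≤
      ENNReal.ofReal ((Λ ^ τ * (2:ℝ) ^ (2*τ - σ)) * q ^ i) * volume (Qc d m₀ j₀) := by
    intro i
    rw [lintegral_const_mul _ (measurable_one.indicator (hUm (i+1))),
      lintegral_indicator_one (hUm (i+1)), Measure.restrict_apply (hUm (i+1))]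
    calc ENNReal.ofReal (((2:ℝ) ^ (i+2) * Λ) ^ τ) * volume (U (i+1) ∩ Qc d m₀ j₀)
        ≤ ENNReal.ofReal (((2:ℝ) ^ (i+2) * Λ) ^ τ) * volume (U (i+1)) :=
          mul_le_mul_right (measure_mono Set.inter_subset_left) _
      _ ≤ ENNReal.ofReal (((2:ℝ) ^ (i+2) * Λ) ^ τ) *
            (ENNReal.ofReal ((((2:ℝ) ^ (i+1)) ^ σ)⁻¹) * volume (Qc d m₀ j₀)) :=
          mul_le_mul_right (hUvol (i+1)) _
      _ = ENNReal.ofReal (((2:ℝ) ^ (i+2) * Λ) ^ τ * ((((2:ℝ) ^ (i+1)) ^ σ)⁻¹)) *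
            volume (Qc d m₀ j₀) := by
          rw [← mul_assoc, ← ENNReal.ofReal_mul (Real.rpow_nonneg (by positivity) _)]
      _ = ENNReal.ofReal ((Λ ^ τ * (2:ℝ) ^ (2*τ - σ)) * q ^ i) * volume (Qc d m₀ j₀) := by
          rw [hkey i]
  -- the total integral bound
  have hlint : (∫⁻ x in Qc d m₀ j₀, H x) ≤
      ENNReal.ofReal (Λ ^ τ * K) * volume (Qc d m₀ j₀) := by
    have hmeas : ∀ i : ℕ, AEMeasurable (fun x =>
        ENNReal.ofReal (((2:ℝ) ^ (i+2) * Λ) ^ τ) * (U (i+1)).indicator 1 x)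
        (volume.restrict (Qc d m₀ j₀)) :=
      fun i => ((measurable_one.indicator (hUm (i+1))).const_mul _).aemeasurable
    calc (∫⁻ x in Qc d m₀ j₀, H x)
        = ENNReal.ofReal ((2*Λ) ^ τ) * volume (Qc d m₀ j₀) +
            ∫⁻ x in Qc d m₀ j₀,
              ∑' i : ℕ, ENNReal.ofReal (((2:ℝ) ^ (i+2) * Λ) ^ τ) * (U (i+1)).indicator 1 x := by
          simp only [hHdef]
          rw [lintegral_add_left measurable_const, setLIntegral_const]
      _ = ENNReal.ofReal ((2*Λ) ^ τ) * volume (Qc d m₀ j₀) +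
            ∑' i : ℕ, ∫⁻ x in Qc d m₀ j₀,
              ENNReal.ofReal (((2:ℝ) ^ (i+2) * Λ) ^ τ) * (U (i+1)).indicator 1 x := by
          rw [lintegral_tsum hmeas]
      _ ≤ ENNReal.ofReal ((2*Λ) ^ τ) * volume (Qc d m₀ j₀) +
            ∑' i : ℕ, ENNReal.ofReal ((Λ ^ τ * (2:ℝ) ^ (2*τ - σ)) * q ^ i) *
              volume (Qc d m₀ j₀) :=
          add_le_add le_rfl (ENNReal.tsum_le_tsum hterm)
      _ = ENNReal.ofReal ((2*Λ) ^ τ) * volume (Qc d m₀ j₀) +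
            (∑' i : ℕ, ENNReal.ofReal ((Λ ^ τ * (2:ℝ) ^ (2*τ - σ)) * q ^ i)) *
              volume (Qc d m₀ j₀) := by
          rw [ENNReal.tsum_mul_right]
      _ = ENNReal.ofReal ((2*Λ) ^ τ) * volume (Qc d m₀ j₀) +
            ENNReal.ofReal ((Λ ^ τ * (2:ℝ) ^ (2*τ - σ)) * (1 - q)⁻¹) * volume (Qc d m₀ j₀) := by
          congr 2
          have : ∀ i : ℕ, ENNReal.ofReal ((Λ ^ τ * (2:ℝ) ^ (2*τ - σ)) * q ^ i) =
              ENNReal.ofReal (Λ ^ τ * (2:ℝ) ^ (2*τ - σ)) * (ENNReal.ofReal q) ^ i := by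
            intro i
            rw [ENNReal.ofReal_mul ha0, ENNReal.ofReal_pow hq0.le]
          rw [tsum_congr this, ENNReal.tsum_mul_left, ENNReal.tsum_geometric]
          rw [ENNReal.ofReal_mul ha0]
          congr 1
          rw [← ENNReal.ofReal_one, ← ENNReal.ofReal_sub 1 hq0.le,
            ← ENNReal.ofReal_inv_of_pos (by linarith)]
      _ = ENNReal.ofReal (Λ ^ τ * K) * volume (Qc d m₀ j₀) := by
          rw [← add_mul, ← ENNReal.ofReal_add (Real.rpow_nonneg (by positivity) _)
            (mul_nonneg ha0 (inv_nonneg.2 (by linarith)))]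
          congr 2
          rw [hKdef, Real.mul_rpow h2.le hΛ0]
          field_simp
  have hfin : (∫⁻ x in Qc d m₀ j₀, H x) ≠ ⊤ := by
    refine (lt_of_le_of_lt hlint ?_).ne
    exact ENNReal.mul_lt_top ENNReal.ofReal_lt_top hvtop.lt_top
  have haelt : ∀ᵐ x ∂(volume.restrict (Qc d m₀ j₀)), H x < ⊤ := ae_lt_top hHm hfin
  have hint2 : Integrable (fun x => (H x).toReal) (volume.restrict (Qc d m₀ j₀)) :=
    integrable_toReal_of_lintegral_ne_top hHm.aemeasurable hfin
  have hmono : ∀ᵐ x ∂(volume.restrict (Qc d m₀ j₀)), W x ^ τ ≤ (H x).toReal := by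
    filter_upwards [haelt, ae_restrict_mem (measurableSet_Qc m₀ j₀)] with x hxfin hxmem
    have h1 := hpt x hxmem
    have h2' : (ENNReal.ofReal (W x ^ τ)).toReal ≤ (H x).toReal :=
      ENNReal.toReal_mono hxfin.ne h1
    rwa [ENNReal.toReal_ofReal (Real.rpow_nonneg (hWx0 x) τ)] at h2'
  have hΛK0 : (0:ℝ) ≤ Λ ^ τ * K := mul_nonneg (Real.rpow_nonneg hΛ0 _) hK0.le
  calc ∫ x in Qc d m₀ j₀, W x ^ τ
      ≤ ∫ x in Qc d m₀ j₀, (H x).toReal :=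
        integral_mono_of_nonneg
          (Filter.Eventually.of_forall fun x => Real.rpow_nonneg (hWx0 x) τ) hint2 hmono
    _ = (∫⁻ x in Qc d m₀ j₀, H x).toReal := integral_toReal hHm.aemeasurable haelt
    _ ≤ (ENNReal.ofReal (Λ ^ τ * K) * volume (Qc d m₀ j₀)).toReal :=
        ENNReal.toReal_mono (ENNReal.mul_ne_top ENNReal.ofReal_ne_top hvtop) hlint
    _ = Λ ^ τ * K * (volume (Qc d m₀ j₀)).toReal := by
        rw [ENNReal.toReal_mul, ENNReal.toReal_ofReal hΛK0]



lemma dyadic_univ₀ : IsDyadicCube (Set.univ : Set (EuclideanSpace ℝ (Fin 0))) :=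
  ⟨0, finZeroElim, (Set.eq_univ_of_forall fun x k => k.elim0).symm⟩

lemma dyadic_eq_univ₀ {Q : Set (EuclideanSpace ℝ (Fin 0))} (h : IsDyadicCube Q) :
    Q = Set.univ := by
  obtain ⟨m, j, rfl⟩ := h
  exact Set.eq_univ_of_forall fun x k => k.elim0

lemma volume_univ₀ : volume (Set.univ : Set (EuclideanSpace ℝ (Fin 0))) = 1 := by
  have h : (Set.univ : Set (EuclideanSpace ℝ (Fin 0))) = Qc 0 0 finZeroElim :=
    (Set.eq_univ_of_forall fun x k => k.elim0).symm
  rw [h, volume_Qc, pow_zero]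

theorem main (d : ℕ) (σ τ : ℝ) (hσ : 1 < σ) (hτ : 1 < τ) (hτσ : τ < σ) :
    ∃ C : ℝ, 0 < C ∧
      ∀ (Q₀ : Set (EuclideanSpace ℝ (Fin d)))
        (V : EuclideanSpace ℝ (Fin d) → ℝ),
        IsDyadicCube Q₀ → Continuous V → (∀ x, 0 ≤ V x) →
        BddAbove {y : ℝ | ∃ Q, IsDyadicCube Q ∧ Q₀ ⊆ Q ∧ y = cubeLpAvg V σ Q} →
        ((volume Q₀).toReal⁻¹ * ∫ x in Q₀,
            (max (sSup {y : ℝ | ∃ Q, IsDyadicCube Q ∧ Q₀ ⊆ Q ∧ y = cubeLpAvg V σ Q})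
              (sSup {y : ℝ | ∃ Q, IsDyadicCube Q ∧ x ∈ Q ∧ Q ⊆ Q₀ ∧
                y = cubeLpAvg V σ Q})) ^ τ) ^ (1 / τ) ≤
          C * sSup {y : ℝ | ∃ Q, IsDyadicCube Q ∧ Q₀ ⊆ Q ∧ y = cubeLpAvg V σ Q} := by
  have hσ0 : (0:ℝ) < σ := lt_trans one_pos hσ
  have hτ0 : (0:ℝ) < τ := lt_trans one_pos hτ
  have hττ : τ * (1/τ) = 1 := by field_simp
  set r : ℝ := (2:ℝ) ^ (τ - σ) with hrdef
  have hr0 : 0 < r := Real.rpow_pos_of_pos two_pos _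
  have hr1 : r < 1 := Real.rpow_lt_one_of_one_lt_of_neg one_lt_two (by linarith)
  set K : ℝ := (2:ℝ) ^ τ + ((2:ℝ) ^ (2*τ - σ)) / (1 - r) with hKdef
  have hK0 : 0 < K := by
    rw [hKdef]
    have h1 : (0:ℝ) < (2:ℝ) ^ τ := Real.rpow_pos_of_pos two_pos _
    have h2 : (0:ℝ) ≤ ((2:ℝ) ^ (2*τ - σ)) / (1 - r) :=
      div_nonneg (Real.rpow_pos_of_pos two_pos _).le (by linarith)
    linarith
  refine ⟨1 + K ^ (1/τ), by positivity, ?_⟩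
  have hC1 : (1:ℝ) ≤ 1 + K ^ (1/τ) := le_add_of_nonneg_right (Real.rpow_nonneg hK0.le _)
  have hCK : K ^ (1/τ) ≤ 1 + K ^ (1/τ) := le_add_of_nonneg_left zero_le_one
  intro Q₀ V hQ₀ hV hV0 hbdd
  rcases Nat.eq_zero_or_pos d with hd | hd
  -- dimension zero: everything is the full space
  · subst hd
    obtain rfl : Q₀ = Set.univ := dyadic_eq_univ₀ hQ₀
    set c := cubeLpAvg V σ (Set.univ : Set (EuclideanSpace ℝ (Fin 0))) with hc
    have hc0 : 0 ≤ c := cubeLpAvg_nonneg' hV0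
    have hS1 : {y : ℝ | ∃ Q, IsDyadicCube Q ∧ Set.univ ⊆ Q ∧ y = cubeLpAvg V σ Q} = {c} := by
      ext y
      simp only [Set.mem_setOf_eq, Set.mem_singleton_iff]
      constructor
      · rintro ⟨Q, hQ, -, rfl⟩; rw [dyadic_eq_univ₀ hQ]
      · rintro rfl; exact ⟨Set.univ, dyadic_univ₀, subset_rfl, rfl⟩
    have hS2 : ∀ x : EuclideanSpace ℝ (Fin 0),
        {y : ℝ | ∃ Q, IsDyadicCube Q ∧ x ∈ Q ∧ Q ⊆ Set.univ ∧ y = cubeLpAvg V σ Q} = {c} := by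
      intro x
      ext y
      simp only [Set.mem_setOf_eq, Set.mem_singleton_iff]
      constructor
      · rintro ⟨Q, hQ, -, -, rfl⟩; rw [dyadic_eq_univ₀ hQ]
      · rintro rfl; exact ⟨Set.univ, dyadic_univ₀, Set.mem_univ x, subset_rfl, rfl⟩
    rw [hS1]
    have hint : (∫ x in (Set.univ : Set (EuclideanSpace ℝ (Fin 0))),
        (max (sSup ({c} : Set ℝ)) (sSup {y : ℝ | ∃ Q, IsDyadicCube Q ∧ x ∈ Q ∧ Q ⊆ Set.univ ∧
          y = cubeLpAvg V σ Q})) ^ τ) = c ^ τ := by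
      rw [setIntegral_congr_fun (MeasurableSet.univ) (g := fun _ => c ^ τ)
        (fun x _ => by rw [hS2 x]; simp)]
      rw [setIntegral_const, measureReal_def, volume_univ₀]
      simp
    rw [hint, csSup_singleton, volume_univ₀]
    have heq : (((1:ENNReal)).toReal⁻¹ * c ^ τ) ^ (1/τ) = c := by
      rw [ENNReal.toReal_one, inv_one, one_mul, ← Real.rpow_mul hc0, hττ, Real.rpow_one]
    rw [heq]
    nlinarith [mul_le_mul_of_nonneg_right hC1 hc0]
  -- positive dimension
  · obtain ⟨m₀, j₀, hQeq⟩ := hQ₀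
    have hQeq' : Q₀ = Qc d m₀ j₀ := hQeq
    subst hQeq'
    set S : Set ℝ := {y | ∃ Q, IsDyadicCube Q ∧ Qc d m₀ j₀ ⊆ Q ∧ y = cubeLpAvg V σ Q}
      with hSdef
    set Λ : ℝ := sSup S with hLdef
    have hg0 : ∀ x, 0 ≤ V x ^ σ := fun x => Real.rpow_nonneg (hV0 x) _
    have hgi : IntegrableOn (fun x => V x ^ σ) (Qc d m₀ j₀) volume :=
      (hV.rpow_const fun x => Or.inr hσ0.le).continuousOn.integrableOn_compact
        (isCompact_Qc m₀ j₀)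
    have havgS : cubeLpAvg V σ (Qc d m₀ j₀) ∈ S := ⟨Qc d m₀ j₀, ⟨m₀, j₀, rfl⟩, subset_rfl, rfl⟩
    have hΛavg : cubeLpAvg V σ (Qc d m₀ j₀) ≤ Λ := le_csSup hbdd havgS
    have hΛ0 : 0 ≤ Λ := (cubeLpAvg_nonneg' hV0).trans hΛavg
    have hgQ₀ : ∫ x in Qc d m₀ j₀, V x ^ σ ≤ Λ ^ σ * (volume (Qc d m₀ j₀)).toReal :=
      integral_le_of_avg_le hV0 hσ0 m₀ j₀ hΛavg
    have hvol0 := volume_Qc_toReal_pos m₀ j₀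
    rcases hΛ0.eq_or_lt' with hΛz | hΛpos
    -- degenerate case Λ = 0
    · have hallz : ∀ x, x ∈ Qc d m₀ j₀ →
          ∀ y ∈ {y : ℝ | ∃ Q, IsDyadicCube Q ∧ x ∈ Q ∧ Q ⊆ Qc d m₀ j₀ ∧ y = cubeLpAvg V σ Q},
            y = 0 := by
        rintro x hx y ⟨Q, ⟨m, j, rfl⟩, hxQ, hsub, rfl⟩
        have hsub' : Qc d m j ⊆ Qc d m₀ j₀ := hsub
        have h1 : ∫ z in Qc d m j, V z ^ σ ≤ ∫ z in Qc d m₀ j₀, V z ^ σ :=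
          setIntegral_mono_set hgi (Filter.Eventually.of_forall hg0)
            (HasSubset.Subset.eventuallyLE hsub')
        have h2 : (0:ℝ) ≤ ∫ z in Qc d m j, V z ^ σ := integral_nonneg hg0
        have hQ0z : ∫ z in Qc d m₀ j₀, V z ^ σ ≤ 0 := by
          have := hgQ₀
          rw [hΛz, Real.zero_rpow hσ0.ne', zero_mul] at this
          exact this
        have h3 : ∫ z in Qc d m j, V z ^ σ = 0 := le_antisymm (h1.trans hQ0z) h2
        show cubeLpAvg V σ (Qc d m j) = 0
        show ((volume (Qc d m j)).toReal⁻¹ * ∫ z in Qc d m j, V z ^ σ) ^ (1/σ) = 0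
        rw [h3, mul_zero, Real.zero_rpow (one_div_ne_zero hσ0.ne')]
      have hEq : Set.EqOn
          (fun x => (max Λ (sSup {y : ℝ | ∃ Q, IsDyadicCube Q ∧ x ∈ Q ∧ Q ⊆ Qc d m₀ j₀ ∧
            y = cubeLpAvg V σ Q})) ^ τ) (fun _ => (0:ℝ)) (Qc d m₀ j₀) := by
        intro x hx
        have hb : BddAbove {y : ℝ | ∃ Q, IsDyadicCube Q ∧ x ∈ Q ∧ Q ⊆ Qc d m₀ j₀ ∧
            y = cubeLpAvg V σ Q} := ⟨0, fun y hy => (hallz x hx y hy).le⟩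
        have hmem : cubeLpAvg V σ (Qc d m₀ j₀) ∈ {y : ℝ | ∃ Q, IsDyadicCube Q ∧ x ∈ Q ∧
            Q ⊆ Qc d m₀ j₀ ∧ y = cubeLpAvg V σ Q} :=
          ⟨Qc d m₀ j₀, ⟨m₀, j₀, rfl⟩, hx, subset_rfl, rfl⟩
        have hge : cubeLpAvg V σ (Qc d m₀ j₀) ≤
            sSup {y : ℝ | ∃ Q, IsDyadicCube Q ∧ x ∈ Q ∧ Q ⊆ Qc d m₀ j₀ ∧
              y = cubeLpAvg V σ Q} := le_csSup hb hmem
        have h0' : cubeLpAvg V σ (Qc d m₀ j₀) = 0 := hallz x hx _ hmem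
        have hSx : sSup {y : ℝ | ∃ Q, IsDyadicCube Q ∧ x ∈ Q ∧ Q ⊆ Qc d m₀ j₀ ∧
            y = cubeLpAvg V σ Q} = 0 :=
          le_antisymm (Real.sSup_le (fun y hy => (hallz x hx y hy).le) le_rfl)
            (h0' ▸ hge)
        simp only
        rw [hSx, hΛz, max_self, Real.zero_rpow hτ0.ne']
      rw [setIntegral_congr_fun (measurableSet_Qc m₀ j₀) hEq, integral_zero, mul_zero,
        Real.zero_rpow (one_div_ne_zero hτ0.ne'), hΛz, mul_zero]
    -- main case Λ > 0
    · have hWsup : ∀ x ∈ Qc d m₀ j₀, ∀ b : ℝ, 0 ≤ b → Λ ≤ b →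
          b < (fun x => max Λ (sSup {y : ℝ | ∃ Q, IsDyadicCube Q ∧ x ∈ Q ∧ Q ⊆ Qc d m₀ j₀ ∧
            y = cubeLpAvg V σ Q})) x →
          ∃ m j, x ∈ Qc d m j ∧ Qc d m j ⊆ Qc d m₀ j₀ ∧ b < cubeLpAvg V σ (Qc d m j) := by
        intro x _ b hb0 hΛb hbW
        simp only [lt_max_iff] at hbW
        have hbs : b < sSup {y : ℝ | ∃ Q, IsDyadicCube Q ∧ x ∈ Q ∧ Q ⊆ Qc d m₀ j₀ ∧
            y = cubeLpAvg V σ Q} := by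
          rcases hbW with h | h
          · exact absurd h (not_lt.mpr hΛb)
          · exact h
        obtain ⟨y, hy, hylt⟩ := exists_mem_gt_of_lt_sSup hb0 hbs
        obtain ⟨Q, ⟨m, j, rfl⟩, hxQ, hsubQ, rfl⟩ := hy
        exact ⟨m, j, hxQ, hsubQ, hylt⟩
      have hI := main_pos hd hσ hτ hτσ m₀ j₀ hV hV0 hΛpos hgQ₀
        (fun x => max Λ (sSup {y : ℝ | ∃ Q, IsDyadicCube Q ∧ x ∈ Q ∧ Q ⊆ Qc d m₀ j₀ ∧
          y = cubeLpAvg V σ Q})) (fun x => le_max_left _ _) hWsup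
      have hIb : ∫ x in Qc d m₀ j₀, (max Λ (sSup {y : ℝ | ∃ Q, IsDyadicCube Q ∧ x ∈ Q ∧
          Q ⊆ Qc d m₀ j₀ ∧ y = cubeLpAvg V σ Q})) ^ τ ≤
          Λ ^ τ * K * (volume (Qc d m₀ j₀)).toReal := by
        rw [hKdef, hrdef]
        exact hI
      have h0I : (0:ℝ) ≤ ∫ x in Qc d m₀ j₀, (max Λ (sSup {y : ℝ | ∃ Q, IsDyadicCube Q ∧
          x ∈ Q ∧ Q ⊆ Qc d m₀ j₀ ∧ y = cubeLpAvg V σ Q})) ^ τ :=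
        integral_nonneg fun x => Real.rpow_nonneg (hΛ0.trans (le_max_left _ _)) _
      have hvinv : (0:ℝ) ≤ (volume (Qc d m₀ j₀)).toReal⁻¹ := inv_nonneg.2 hvol0.le
      calc ((volume (Qc d m₀ j₀)).toReal⁻¹ * ∫ x in Qc d m₀ j₀,
              (max Λ (sSup {y : ℝ | ∃ Q, IsDyadicCube Q ∧ x ∈ Q ∧ Q ⊆ Qc d m₀ j₀ ∧
                y = cubeLpAvg V σ Q})) ^ τ) ^ (1/τ)
          ≤ ((volume (Qc d m₀ j₀)).toReal⁻¹ *
              (Λ ^ τ * K * (volume (Qc d m₀ j₀)).toReal)) ^ (1/τ) :=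
            Real.rpow_le_rpow (mul_nonneg hvinv h0I)
              (mul_le_mul_of_nonneg_left hIb hvinv) (by positivity)
        _ = (Λ ^ τ * K) ^ (1/τ) := by
            rw [show (volume (Qc d m₀ j₀)).toReal⁻¹ * (Λ ^ τ * K *
              (volume (Qc d m₀ j₀)).toReal) = Λ ^ τ * K by field_simp]
        _ = Λ * K ^ (1/τ) := by
            rw [Real.mul_rpow (Real.rpow_nonneg hΛ0 _) hK0.le, ← Real.rpow_mul hΛ0,
              hττ, Real.rpow_one]
        _ ≤ (1 + K ^ (1/τ)) * Λ := by
            rw [mul_comm]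
            exact mul_le_mul_of_nonneg_right hCK hΛ0



/-- With `W₀(x) = sup_{x ∈ Q ⊆ Q₀} (|Q|⁻¹ ∫_Q V^σ)^{1/σ}`,
`Λ = sup_{Q ⊇ Q₀} (|Q|⁻¹ ∫_Q V^σ)^{1/σ} < ∞` and `W = max {Λ, W₀}`, one has the
reverse-Hölder bound `(|Q₀|⁻¹ ∫_{Q₀} W^τ)^{1/τ} ≤ C Λ`, with `C = C(n, σ, τ)`. -/
theorem stmt_12 (n : ℕ) (σ τ : ℝ) (hσ : 1 < σ) (hτ : 1 < τ) (hτσ : τ < σ) :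
    ∃ C : ℝ, 0 < C ∧
      ∀ (Q₀ : Set (EuclideanSpace ℝ (Fin (n - 1))))
        (V : EuclideanSpace ℝ (Fin (n - 1)) → ℝ),
        IsDyadicCube Q₀ → Continuous V → (∀ x, 0 ≤ V x) →
        BddAbove {y : ℝ | ∃ Q, IsDyadicCube Q ∧ Q₀ ⊆ Q ∧ y = cubeLpAvg V σ Q} →
        ((volume Q₀).toReal⁻¹ * ∫ x in Q₀,
            (max (sSup {y : ℝ | ∃ Q, IsDyadicCube Q ∧ Q₀ ⊆ Q ∧ y = cubeLpAvg V σ Q})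
              (sSup {y : ℝ | ∃ Q, IsDyadicCube Q ∧ x ∈ Q ∧ Q ⊆ Q₀ ∧
                y = cubeLpAvg V σ Q})) ^ τ) ^ (1 / τ) ≤
          C * sSup {y : ℝ | ∃ Q, IsDyadicCube Q ∧ Q₀ ⊆ Q ∧ y = cubeLpAvg V σ Q} :=
  main (n - 1) σ τ hσ hτ hτσ
end

section
/- Let Σ be a compact hypersurface, N : Σ → S^{n-1} smooth, and at a point x ∈ Σ let λ₁,…,λ_{n-1} ≥ 0 be the singular values of dN : T_xΣ → T_{N(x)}S^{n-1}. For any m-tuple of spinors s = (s₁,…,s_m) satisfying the normalization identity of Clifford multiplication, the quantity B(s) = ∑_{k,a,α,β} ⟨dN(e_k),Eₐ⟩ ω_{aαβ} ⟨e_k·s_β, s_α⟩ satisfies |B(s)| ≤ (∑_k λ_k)·(∑_α |s_α|²) = ‖dN‖_tr·∑_α |s_α|². -/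
open Matrix
open scoped ComplexInnerProductSpace

/-- Per-`k` bound: if `M Mᴴ = 1` and `e` is a skew isometry, then the bilinear
sum is bounded by `∑ ‖s α‖²`. -/
lemma aux_bound {m : ℕ} {Δ : Type*} [NormedAddCommGroup Δ] [InnerProductSpace ℂ Δ]
    (M : Matrix (Fin m) (Fin m) ℂ) (hMMH : M * Mᴴ = 1)
    (e : Δ →ₗ[ℂ] Δ)
    (he1 : ∀ (v w : Δ), ⟪e v, w⟫ = -⟪v, e w⟫)
    (he2 : ∀ (v : Δ), e (e v) = -v)
    (s : Fin m → Δ) :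
    ‖∑ α, ∑ β, M α β * ⟪e (s β), s α⟫‖ ≤ ∑ α, ‖s α‖ ^ 2 := by
  classical
  set t : Fin m → Δ := fun β => ∑ α, M α β • s α with ht
  have hne : ∀ v : Δ, ‖e v‖ = ‖v‖ := by
    intro v
    have h : (⟪e v, e v⟫ : ℂ) = ⟪v, v⟫ := by
      rw [he1, he2, inner_neg_right, neg_neg]
    have h2 : (‖e v‖ : ℂ) ^ 2 = (‖v‖ : ℂ) ^ 2 := by
      rwa [inner_self_eq_norm_sq_to_K, inner_self_eq_norm_sq_to_K] at h
    have h3 : ‖e v‖ ^ 2 = ‖v‖ ^ 2 := by exact_mod_cast h2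
    have := congrArg Real.sqrt h3
    simpa [Real.sqrt_sq, norm_nonneg] using this
  have hQ : ∑ α, ∑ β, M α β * ⟪e (s β), s α⟫ = ∑ β, ⟪e (s β), t β⟫ := by
    rw [Finset.sum_comm]
    refine Finset.sum_congr rfl fun β _ => ?_
    rw [ht]
    simp only [inner_sum, inner_smul_right]
  have hts : ∑ β, ‖t β‖ ^ 2 = ∑ α, ‖s α‖ ^ 2 := by
    have hc : (∑ β, (⟪t β, t β⟫ : ℂ)) = ∑ α, ⟪s α, s α⟫ := by
      have expand : ∀ β, (⟪t β, t β⟫ : ℂ) =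
          ∑ α, ∑ γ, M α β * (starRingEnd ℂ) (M γ β) * ⟪s γ, s α⟫ := by
        intro β
        rw [ht]
        simp only [sum_inner, inner_sum, inner_smul_left, inner_smul_right, Finset.mul_sum]
        refine Finset.sum_congr rfl fun α _ => Finset.sum_congr rfl fun γ _ => ?_
        ring
      calc (∑ β, (⟪t β, t β⟫ : ℂ))
          = ∑ β, ∑ α, ∑ γ, M α β * (starRingEnd ℂ) (M γ β) * ⟪s γ, s α⟫ :=
            Finset.sum_congr rfl fun β _ => expand β
        _ = ∑ α, ∑ γ, (∑ β, M α β * (starRingEnd ℂ) (M γ β)) * ⟪s γ, s α⟫ := by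
            rw [Finset.sum_comm]
            refine Finset.sum_congr rfl fun α _ => ?_
            rw [Finset.sum_comm]
            refine Finset.sum_congr rfl fun γ _ => ?_
            rw [Finset.sum_mul]
        _ = ∑ α, ∑ γ, (M * Mᴴ) α γ * ⟪s γ, s α⟫ := by
            refine Finset.sum_congr rfl fun α _ => Finset.sum_congr rfl fun γ _ => ?_
            rw [Matrix.mul_apply]
            simp [Matrix.conjTranspose_apply]
        _ = ∑ α, ⟪s α, s α⟫ := by
            refine Finset.sum_congr rfl fun α _ => ?_
            rw [hMMH]
            rw [Finset.sum_eq_single α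
              (fun γ _ hγ => by rw [Matrix.one_apply, if_neg (fun h => hγ h.symm), zero_mul])
              (fun h => absurd (Finset.mem_univ α) h)]
            rw [Matrix.one_apply, if_pos rfl, one_mul]
    have hc2 : (∑ β, ((‖t β‖ : ℂ)) ^ 2) = ∑ α, ((‖s α‖ : ℂ)) ^ 2 := by
      simpa [inner_self_eq_norm_sq_to_K] using hc
    exact_mod_cast hc2
  calc ‖∑ α, ∑ β, M α β * ⟪e (s β), s α⟫‖
      = ‖∑ β, ⟪e (s β), t β⟫‖ := by rw [hQ]
    _ ≤ ∑ β, ‖(⟪e (s β), t β⟫ : ℂ)‖ := norm_sum_le _ _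
    _ ≤ ∑ β, ‖s β‖ * ‖t β‖ := by
        refine Finset.sum_le_sum fun β _ => ?_
        calc ‖(⟪e (s β), t β⟫ : ℂ)‖ ≤ ‖e (s β)‖ * ‖t β‖ := norm_inner_le_norm _ _
          _ = ‖s β‖ * ‖t β‖ := by rw [hne]
    _ ≤ ∑ β, (‖s β‖ ^ 2 + ‖t β‖ ^ 2) / 2 := by
        refine Finset.sum_le_sum fun β _ => ?_
        nlinarith [sq_nonneg (‖s β‖ - ‖t β‖)]
    _ = ∑ α, ‖s α‖ ^ 2 := by
        rw [← Finset.sum_div, Finset.sum_add_distrib, hts]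
        ring

/-- bound on the boundary term `B(s)` by the trace norm of `dN`.  Working
at a point, write `dN(e_k) = λ_k Êₖ` with `λ_k ≥ 0` the singular values of `dN` and `Êₖ`
orthonormal unit vectors in `ℝⁿ`; the Clifford multiplications `e_k·` are skew-adjoint
with square `-id`.  Then
`|B(s)| = |∑_{k,a,α,β} ⟨dN(e_k),Eₐ⟩ ω_{aαβ} ⟨e_k·s_β, s_α⟩| ≤ (∑_k λ_k) ∑_α |s_α|²`. -/
theorem stmt_18 (n m : ℕ)
    (ω : Fin n → Matrix (Fin m) (Fin m) ℂ)
    (hcl : ∀ a b, ω a * ω b + ω b * ω a =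
      (-2 : ℂ) • (if a = b then (1 : Matrix (Fin m) (Fin m) ℂ) else 0))
    (hskew : ∀ a, (ω a)ᴴ = -ω a)
    (Δ : Type*) [NormedAddCommGroup Δ] [InnerProductSpace ℂ Δ]
    (lam : Fin (n - 1) → ℝ) (hlam : ∀ k, 0 ≤ lam k)
    (Ehat : Fin (n - 1) → EuclideanSpace ℝ (Fin n))
    (hE : ∀ k l, @inner ℝ _ _ (Ehat k) (Ehat l) = if k = l then (1 : ℝ) else 0)
    (e : Fin (n - 1) → Δ →ₗ[ℂ] Δ)
    (he1 : ∀ k (v w : Δ), ⟪e k v, w⟫ = -⟪v, e k w⟫)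
    (he2 : ∀ k (v : Δ), e k (e k v) = -v)
    (s : Fin m → Δ) :
    ‖∑ k, (lam k : ℂ) *
        ∑ a, ∑ α, ∑ β, ((Ehat k a : ℂ) * ω a α β) * ⟪e k (s β), s α⟫‖ ≤
      (∑ k, lam k) * ∑ α, ‖s α‖ ^ 2 := by
  classical
  set S := ∑ α, ‖s α‖ ^ 2 with hS
  have hS0 : 0 ≤ S := Finset.sum_nonneg fun α _ => sq_nonneg _
  have key : ∀ k, ‖∑ a, ∑ α, ∑ β, ((Ehat k a : ℂ) * ω a α β) * ⟪e k (s β), s α⟫‖ ≤ S := by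
    intro k
    set c : Fin n → ℂ := fun a => (Ehat k a : ℂ) with hcdef
    set M : Matrix (Fin m) (Fin m) ℂ := ∑ a, c a • ω a with hM
    have hMentry : ∀ α β, M α β = ∑ a, c a * ω a α β := by
      intro α β
      simp [hM, Matrix.sum_apply]
    have hcsum : ∑ a, c a * c a = 1 := by
      have h := hE k k
      simp only [if_pos rfl, PiLp.inner_apply, RCLike.inner_apply, conj_trivial] at h
      have : ((∑ a, Ehat k a * Ehat k a : ℝ) : ℂ) = 1 := by rw [h]; norm_num
      simpa [hcdef] using this
    have hcreal : ∀ a, star (c a) = c a := fun a => by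
      simp [hcdef]
    have hMconj : Mᴴ = -M := by
      rw [hM, Matrix.conjTranspose_sum]
      rw [← Finset.sum_neg_distrib]
      refine Finset.sum_congr rfl fun a _ => ?_
      rw [Matrix.conjTranspose_smul, hskew, hcreal, smul_neg]
    have hMM : M * M = -1 := by
      have hs' : M * M = ∑ a, ∑ b, (c a * c b) • (ω a * ω b) := by
        rw [hM, Finset.sum_mul_sum]
        refine Finset.sum_congr rfl fun a _ => Finset.sum_congr rfl fun b _ => ?_
        rw [Matrix.smul_mul, Matrix.mul_smul, smul_smul]
      have hswap : (∑ a, ∑ b, (c a * c b) • (ω a * ω b))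
          = ∑ a, ∑ b, (c a * c b) • (ω b * ω a) := by
        rw [Finset.sum_comm]
        refine Finset.sum_congr rfl fun a _ => Finset.sum_congr rfl fun b _ => ?_
        rw [mul_comm (c b) (c a)]
      have h2 : M * M + M * M = (-2 : ℂ) • (1 : Matrix (Fin m) (Fin m) ℂ) := by
        rw [hs']
        nth_rewrite 2 [hswap]
        rw [← Finset.sum_add_distrib]
        have : ∀ a ∈ Finset.univ, (∑ b, (c a * c b) • (ω a * ω b)) + ∑ b, (c a * c b) • (ω b * ω a)
            = ∑ b, (c a * c b) • ((-2 : ℂ) • (if a = b then (1 : Matrix (Fin m) (Fin m) ℂ) else 0)) := by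
          intro a _
          rw [← Finset.sum_add_distrib]
          refine Finset.sum_congr rfl fun b _ => ?_
          rw [← smul_add, hcl]
        rw [Finset.sum_congr rfl this]
        have : ∀ a ∈ Finset.univ, (∑ b, (c a * c b) • ((-2 : ℂ) • (if a = b then (1 : Matrix (Fin m) (Fin m) ℂ) else 0)))
            = (c a * c a) • ((-2 : ℂ) • (1 : Matrix (Fin m) (Fin m) ℂ)) := by
          intro a _
          rw [Finset.sum_eq_single a (fun b _ hb => by simp [Ne.symm hb])
            (fun h => absurd (Finset.mem_univ a) h)]
          simp
        rw [Finset.sum_congr rfl this, ← Finset.sum_smul, hcsum, one_smul]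
      have h3 : (2 : ℂ) • (M * M) = (2 : ℂ) • (-1 : Matrix (Fin m) (Fin m) ℂ) := by
        rw [two_smul, h2]
        simp [neg_smul]
      exact smul_right_injective _ (by norm_num : (2:ℂ) ≠ 0) h3
    have hMMH : M * Mᴴ = 1 := by
      rw [hMconj, Matrix.mul_neg, hMM]
      simp
    have hrw : (∑ a, ∑ α, ∑ β, (c a * ω a α β) * ⟪e k (s β), s α⟫)
        = ∑ α, ∑ β, M α β * ⟪e k (s β), s α⟫ := by
      rw [Finset.sum_comm]
      refine Finset.sum_congr rfl fun α _ => ?_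
      rw [Finset.sum_comm]
      refine Finset.sum_congr rfl fun β _ => ?_
      rw [hMentry, Finset.sum_mul]
    calc ‖∑ a, ∑ α, ∑ β, (c a * ω a α β) * ⟪e k (s β), s α⟫‖
        = ‖∑ α, ∑ β, M α β * ⟪e k (s β), s α⟫‖ := by rw [hrw]
      _ ≤ S := aux_bound M hMMH (e k) (he1 k) (he2 k) s
  calc ‖∑ k, (lam k : ℂ) * ∑ a, ∑ α, ∑ β, ((Ehat k a : ℂ) * ω a α β) * ⟪e k (s β), s α⟫‖
      ≤ ∑ k, ‖(lam k : ℂ) * ∑ a, ∑ α, ∑ β, ((Ehat k a : ℂ) * ω a α β) * ⟪e k (s β), s α⟫‖ :=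
        norm_sum_le _ _
    _ ≤ ∑ k, lam k * S := by
        refine Finset.sum_le_sum fun k _ => ?_
        rw [norm_mul, Complex.norm_real, Real.norm_eq_abs, abs_of_nonneg (hlam k)]
        exact mul_le_mul_of_nonneg_left (key k) (hlam k)
    _ = (∑ k, lam k) * S := (Finset.sum_mul _ _ _).symm
end
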